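/- In intuitionistic predicate logic with equality extended by ε-terms and the axiom ∃x A(x) → A(εx A(x)) (applied to formulas possibly containing parameters), the formula ∀x∃y P(x,y) → ∀x∀x'∃y∃y'(P(x,y) ∧ P(x',y') ∧ (x = x' → y = y')) is derivable. -/
import Mathlib


-- Terms of intuitionistic predicate logic with Hilbert’s ε-symbol (de Bruijn indices).
mutual
inductive Tm : Type
  | var : Nat → Tm
  | const : Nat → Tm
  | eps : Fm → Tm
inductive Tms : Type
  | nil : Tms
  | cons : Tm → Tms → Tms
inductive Fm : Type
  | atom : Nat → Tms → Fm
  | bot : Fm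
  | top : Fm
  | and : Fm → Fm → Fm
  | or : Fm → Fm → Fm
  | imp : Fm → Fm → Fm
  | all : Fm → Fm
  | ex : Fm → Fm
  | eq : Tm → Tm → Fm
end

-- Lifting (shift de Bruijn variables ≥ c by one).
mutual
def Tm.lift : Nat → Tm → Tm
  | c, .var n => if n < c then .var n else .var (n+1)
  | _, .const k => .const k
  | c, .eps A => .eps (Fm.lift (c+1) A)
def Tms.lift : Nat → Tms → Tms
  | _, .nil => .nil
  | c, .cons t ts => .cons (Tm.lift c t) (Tms.lift c ts)
def Fm.lift : Nat → Fm → Fm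
  | c, .atom p ts => .atom p (Tms.lift c ts)
  | _, .bot => .bot
  | _, .top => .top
  | c, .and A B => .and (Fm.lift c A) (Fm.lift c B)
  | c, .or A B => .or (Fm.lift c A) (Fm.lift c B)
  | c, .imp A B => .imp (Fm.lift c A) (Fm.lift c B)
  | c, .all A => .all (Fm.lift (c+1) A)
  | c, .ex A => .ex (Fm.lift (c+1) A)
  | c, .eq t s => .eq (Tm.lift c t) (Tm.lift c s)
end

-- Substitution of a term for de Bruijn variable m.
mutual
def Tm.subst : Nat → Tm → Tm → Tm
  | m, s, .var n => if n < m then .var n else if n = m then s else .var (n-1)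
  | _, _, .const k => .const k
  | m, s, .eps A => .eps (Fm.subst (m+1) (Tm.lift 0 s) A)
def Tms.subst : Nat → Tm → Tms → Tms
  | _, _, .nil => .nil
  | m, s, .cons t ts => .cons (Tm.subst m s t) (Tms.subst m s ts)
def Fm.subst : Nat → Tm → Fm → Fm
  | m, s, .atom p ts => .atom p (Tms.subst m s ts)
  | _, _, .bot => .bot
  | _, _, .top => .top
  | m, s, .and A B => .and (Fm.subst m s A) (Fm.subst m s B)
  | m, s, .or A B => .or (Fm.subst m s A) (Fm.subst m s B)
  | m, s, .imp A B => .imp (Fm.subst m s A) (Fm.subst m s B)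
  | m, s, .all A => .all (Fm.subst (m+1) (Tm.lift 0 s) A)
  | m, s, .ex A => .ex (Fm.subst (m+1) (Tm.lift 0 s) A)
  | m, s, .eq t u => .eq (Tm.subst m s t) (Tm.subst m s u)
end

/-- `A.subst0 t` substitutes `t` for the outermost bound variable. -/
def Fm.subst0 (A : Fm) (t : Tm) : Fm := Fm.subst 0 t A



/-- Intuitionistic predicate logic with equality, extended with ε-terms, the
unrestricted ε-axiom scheme `∃x A(x) → A(εx A(x))` and unrestricted intuitionistic
quantifier axioms allowing substitution of arbitrary terms (including ε-terms). -/
inductive HilEq : Fm → Prop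
  | k {A B} : HilEq (.imp A (.imp B A))
  | s {A B C} : HilEq (.imp (.imp A (.imp B C)) (.imp (.imp A B) (.imp A C)))
  | andI {A B} : HilEq (.imp A (.imp B (.and A B)))
  | andE₁ {A B} : HilEq (.imp (.and A B) A)
  | andE₂ {A B} : HilEq (.imp (.and A B) B)
  | orI₁ {A B} : HilEq (.imp A (.or A B))
  | orI₂ {A B} : HilEq (.imp B (.or A B))
  | orE {A B C} : HilEq (.imp (.imp A C) (.imp (.imp B C) (.imp (.or A B) C)))
  | botE {A} : HilEq (.imp .bot A)
  | topI : HilEq .top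
  | mp {A B} : HilEq (.imp A B) → HilEq A → HilEq B
  | gen {A} : HilEq A → HilEq (.all A)
  | allShift {A B} : HilEq (.imp (.all (.imp (Fm.lift 0 B) A)) (.imp B (.all A)))
  | exShift {A B} : HilEq (.imp (.all (.imp A (Fm.lift 0 B))) (.imp (.ex A) B))
  | q1 {A : Fm} (t : Tm) : HilEq (.imp (.all A) (A.subst0 t))
  | q2 {A : Fm} (t : Tm) : HilEq (.imp (A.subst0 t) (.ex A))
  | eqRefl (t) : HilEq (.eq t t)
  | eqRepl {A : Fm} (t s : Tm) : HilEq (.imp (.eq t s) (.imp (A.subst0 t) (A.subst0 s)))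
  | epsAx {A} : HilEq (.imp (.ex A) (A.subst0 (.eps A)))

/-- `P(t,s)` for the binary predicate `P`. -/
def Pof (t s : Tm) : Fm := .atom 0 (.cons t (.cons s .nil))


namespace Smor

theorem tr {A B C : Fm} (h1 : HilEq (.imp A B)) (h2 : HilEq (.imp B C)) :
    HilEq (.imp A C) := .mp (.mp .s (.mp .k h2)) h1

theorem ap {X A B : Fm} (h1 : HilEq (.imp X (.imp A B))) (h2 : HilEq (.imp X A)) :
    HilEq (.imp X B) := .mp (.mp .s h1) h2

theorem kk {X A : Fm} (h : HilEq A) : HilEq (.imp X A) := .mp .k h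

def e1 : Tm := .eps (Pof (.var 2) (.var 0))
def e2 : Tm := .eps (Pof (.var 1) (.var 0))
def F1 : Fm := Pof (.var 1) e1
def F2 : Fm := Pof (.var 0) e2
def H : Fm := .all (.ex (Pof (.var 1) (.var 0)))
def C : Fm := .and (.and (Pof (.var 3) (.var 1)) (Pof (.var 2) (.var 0)))
        (.imp (.eq (.var 3) (.var 2)) (.eq (.var 1) (.var 0)))
def C1 : Fm := C.subst 1 (Tm.lift 0 e1)
def Cfin : Fm := .and (.and F1 F2) (.imp (.eq (.var 1) (.var 0)) (.eq e1 e2))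
def E : Fm := .ex (.ex C)
def Aeq : Fm := .eq (Tm.lift 0 e1) (.eps (Pof (.var 1) (.var 0)))

theorem main : HilEq (.imp H (.all (.all E))) := by
  have h1 : HilEq (.imp H (.ex (Pof (.var 2) (.var 0)))) := .q1 (.var 1)
  have h2 : HilEq (.imp H (.ex (Pof (.var 1) (.var 0)))) := .q1 (.var 0)
  have hF1 : HilEq (.imp H F1) := tr h1 (.epsAx (A := Pof (.var 2) (.var 0)))
  have hF2 : HilEq (.imp H F2) := tr h2 (.epsAx (A := Pof (.var 1) (.var 0)))
  have heqstep : HilEq (.imp (.eq (.var 1) (.var 0))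
      (.imp (.eq e1 e1) (.eq e1 e2))) := .eqRepl (A := Aeq) (.var 1) (.var 0)
  have heq : HilEq (.imp (.eq (.var 1) (.var 0)) (.eq e1 e2)) :=
    ap heqstep (kk (.eqRefl e1))
  have h12 : HilEq (.imp H (.and F1 F2)) := ap (tr hF1 .andI) hF2
  have hC : HilEq (.imp H Cfin) := ap (tr h12 .andI) (kk heq)
  have hex1 : HilEq (.imp Cfin (.ex C1)) := .q2 (A := C1) e2
  have hex2 : HilEq (.imp (.ex C1) E) := .q2 (A := .ex C) e1
  have hE : HilEq (.imp H E) := tr hC (tr hex1 hex2)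
  have hAll1 : HilEq (.imp H (.all E)) :=
    .mp (.allShift (A := E) (B := H)) (.gen hE)
  exact .mp (.allShift (A := .all E) (B := H)) (.gen hAll1)

end Smor

/-- Smorynski's example: in intuitionistic predicate logic with
equality extended by ε-terms and the ε-axiom, the formula
`∀x∃y P(x,y) → ∀x∀x'∃y∃y'(P(x,y) ∧ P(x',y') ∧ (x = x' → y = y'))` is derivable. -/
theorem smorynski_derivable :
    HilEq (.imp (.all (.ex (Pof (.var 1) (.var 0))))
      (.all (.all (.ex (.ex (.and (.and (Pof (.var 3) (.var 1)) (Pof (.var 2) (.var 0)))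
        (.imp (.eq (.var 3) (.var 2)) (.eq (.var 1) (.var 0))))))))) := by
  exact Smor.main
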